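/- Let (A, B, U, V) be a spatial Morita context with A ⊆ B(H₁) and B ⊆ B(H₂) unital w*-closed algebras, and let φ = Map(U) and ψ = Map(V). Then: (i) the semilattices of U satisfy S₁,φ = Lat(A) and S₂,φ = Lat(B), so that φ restricts to a lattice isomorphism from Lat(A) onto Lat(B); and (ii) the restriction of ψ to Lat(B) is the inverse of the restriction of φ to Lat(A). -/

import Mathlib

noncomputable section

open ContinuousLinearMap

universe u v w

section OperatorDefs

variable {H : Type u} {K : Type v} {L : Type w}
variable [NormedAddCommGroup H] [InnerProductSpace ℂ H] [CompleteSpace H]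
variable [NormedAddCommGroup K] [InnerProductSpace ℂ K] [CompleteSpace K]
variable [NormedAddCommGroup L] [InnerProductSpace ℂ L] [CompleteSpace L]

/-- The set of all products (compositions) `a ∘ b` with `a ∈ M`, `b ∈ N`. -/
def mulSet (M : Set (K →L[ℂ] L)) (N : Set (H →L[ℂ] K)) : Set (H →L[ℂ] L) :=
  Set.image2 (fun a b => a.comp b) M N

/-- The set `M* = {T* : T ∈ M}` of adjoints of members of `M`. -/
def adjSet (M : Set (H →L[ℂ] K)) : Set (K →L[ℂ] H) :=
  (fun T => ContinuousLinearMap.adjoint T) '' M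

/-- A subset of a complex vector space is a linear subspace. -/
def IsLinSubspace {V : Type*} [AddCommGroup V] [Module ℂ V] (S : Set V) : Prop :=
  ∃ p : Submodule ℂ V, S = ↑p

/-- The σ-weak (ultraweak, w*) topology on `B(H,K)`: the initial topology induced by the
functionals `T ↦ ∑ₙ ⟪yₙ, T xₙ⟫` for square-summable sequences `(xₙ)`, `(yₙ)`. -/
def sigmaWeak (H : Type u) (K : Type v) [NormedAddCommGroup H] [InnerProductSpace ℂ H]
    [NormedAddCommGroup K] [InnerProductSpace ℂ K] : TopologicalSpace (H →L[ℂ] K) :=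
  ⨅ (x : ℕ → H) (y : ℕ → K) (_ : Summable fun n => ‖x n‖ ^ 2)
    (_ : Summable fun n => ‖y n‖ ^ 2),
    TopologicalSpace.induced (fun T => ∑' n, (inner ℂ (y n) (T (x n)) : ℂ)) inferInstance

/-- `S` is closed in the w* (σ-weak) topology. -/
def IsWStarClosed (S : Set (H →L[ℂ] K)) : Prop := @IsClosed _ (sigmaWeak H K) S

/-- The w*-closed linear span of a set of operators. -/
def wspan (S : Set (H →L[ℂ] K)) : Set (H →L[ℂ] K) :=
  @closure _ (sigmaWeak H K) ((Submodule.span ℂ S : Submodule ℂ (H →L[ℂ] K)) : Set (H →L[ℂ] K))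

/-- A ternary ring of operators: a linear subspace `M` with `M M* M ⊆ M`. -/
def IsTRO (M : Set (H →L[ℂ] K)) : Prop :=
  IsLinSubspace M ∧ mulSet (mulSet M (adjSet M)) M ⊆ M

/-- The orthogonal projection (as an operator on `K`) onto the closed linear span of `S`. -/
def projOntoClosure (S : Set K) : K →L[ℂ] K :=
  haveI : CompleteSpace ((Submodule.span ℂ S).topologicalClosure) :=
    (Submodule.isClosed_topologicalClosure _).completeSpace_coe
  ((Submodule.span ℂ S).topologicalClosure).subtypeL.comp
    (Submodule.orthogonalProjection ((Submodule.span ℂ S).topologicalClosure))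

/-- `Map(U)` : sends a projection `P` on `H` to the projection onto the closed linear span of
`{T P ξ : T ∈ U, ξ ∈ H}`. -/
def opMap (U : Set (H →L[ℂ] K)) (P : H →L[ℂ] H) : K →L[ℂ] K :=
  projOntoClosure {y : K | ∃ T ∈ U, ∃ ξ : H, T (P ξ) = y}

/-- `U` is essential: `Map(U)(I) = I` and `Map(U*)(I) = I`. -/
def IsEssential (U : Set (H →L[ℂ] K)) : Prop :=
  opMap U 1 = 1 ∧ opMap (adjSet U) 1 = 1

/-- The commutant of a set of operators. -/
def commutantS (S : Set (H →L[ℂ] H)) : Set (H →L[ℂ] H) :=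
  {T | ∀ s ∈ S, s * T = T * s}

/-- An (orthogonal) projection. -/
def IsProjOp (P : H →L[ℂ] H) : Prop := P * P = P ∧ star P = P

/-- The natural order on projections: `P ≤ Q` iff `P Q = P`. -/
def projLE (P Q : H →L[ℂ] H) : Prop := P * Q = P

/-- The invariant projection lattice of an algebra: `Lat(A) = {L : L⊥ A L = 0}`. -/
def LatSet (A : Set (H →L[ℂ] H)) : Set (H →L[ℂ] H) :=
  {P | IsProjOp P ∧ ∀ T ∈ A, (1 - P) * (T * P) = 0}

/-- `Alg(S) = {T : L⊥ T L = 0 for all L ∈ S}`. -/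
def AlgSet (S : Set (H →L[ℂ] H)) : Set (H →L[ℂ] H) :=
  {T | ∀ P ∈ S, (1 - P) * (T * P) = 0}

/-- The reflexive hull of a space of operators. -/
def RefHull (U : Set (H →L[ℂ] K)) : Set (H →L[ℂ] K) :=
  {T | ∀ ξ : H, T ξ ∈
    closure ((Submodule.span ℂ ((fun S : H →L[ℂ] K => S ξ) '' U) : Submodule ℂ K) : Set K)}

/-- The diagonal `Δ(A) = A ∩ A*` of an algebra. -/
def diagSet (A : Set (H →L[ℂ] H)) : Set (H →L[ℂ] H) := A ∩ (star '' A)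

/-- A w*-closed (not necessarily unital, not necessarily selfadjoint) operator algebra. -/
def IsWStarClosedAlgebra (A : Set (H →L[ℂ] H)) : Prop :=
  IsLinSubspace A ∧ (∀ a ∈ A, ∀ b ∈ A, a * b ∈ A) ∧ IsWStarClosed A

/-- `A ∼_M B` : TRO equivalence via the TRO `M`. -/
def TROEquivalentVia (A : Set (H →L[ℂ] H)) (B : Set (K →L[ℂ] K))
    (M : Set (H →L[ℂ] K)) : Prop :=
  IsTRO M ∧ A = wspan (mulSet (mulSet (adjSet M) B) M) ∧
    B = wspan (mulSet (mulSet M A) (adjSet M))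

/-- TRO equivalence of two algebras. -/
def TROEquivalent (A : Set (H →L[ℂ] H)) (B : Set (K →L[ℂ] K)) : Prop :=
  ∃ M : Set (H →L[ℂ] K), TROEquivalentVia A B M

/-- `θ` restricts to a * isomorphism of `C` onto `E`. -/
def IsStarIsomOn (θ : (H →L[ℂ] H) → (K →L[ℂ] K)) (C : Set (H →L[ℂ] H))
    (E : Set (K →L[ℂ] K)) : Prop :=
  Set.BijOn θ C E ∧ (∀ a ∈ C, ∀ b ∈ C, θ (a + b) = θ a + θ b) ∧
    (∀ (c : ℂ), ∀ a ∈ C, θ (c • a) = c • θ a) ∧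
    (∀ a ∈ C, ∀ b ∈ C, θ (a * b) = θ a * θ b) ∧
    (∀ a ∈ C, θ (star a) = star (θ a))

/-- `φ` restricts to a lattice isomorphism (order preserving bijection) of `S₁` onto `S₂`. -/
def IsLatticeIsomOn (φ : (H →L[ℂ] H) → (K →L[ℂ] K)) (S₁ : Set (H →L[ℂ] H))
    (S₂ : Set (K →L[ℂ] K)) : Prop :=
  Set.BijOn φ S₁ S₂ ∧ ∀ P ∈ S₁, ∀ Q ∈ S₁, (projLE P Q ↔ projLE (φ P) (φ Q))

/-- The supremum of a family of projections: projection onto the closed span of the ranges. -/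
def latSup (F : Set (H →L[ℂ] H)) : H →L[ℂ] H :=
  projOntoClosure (⋃ P ∈ F, Set.range P)

/-- The infimum of a family of projections: projection onto the intersection of the ranges. -/
def latInf (F : Set (H →L[ℂ] H)) : H →L[ℂ] H :=
  projOntoClosure (⋂ P ∈ F, Set.range P)

/-- A commutative subspace lattice: commuting projections, `0, 1 ∈ S`, closed under
arbitrary suprema and infima. -/
def IsCSL (S : Set (H →L[ℂ] H)) : Prop :=
  (∀ P ∈ S, IsProjOp P) ∧ (∀ P ∈ S, ∀ Q ∈ S, P * Q = Q * P) ∧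
    (0 : H →L[ℂ] H) ∈ S ∧ (1 : H →L[ℂ] H) ∈ S ∧
    ∀ F ⊆ S, latSup F ∈ S ∧ latInf F ∈ S

/-- `L♭ = ⋁ {M ∈ S : M < L}`. -/
def latFlat (S : Set (H →L[ℂ] H)) (P : H →L[ℂ] H) : H →L[ℂ] H :=
  latSup {M | M ∈ S ∧ projLE M P ∧ M ≠ P}

/-- An atom of the lattice `S` : a (nonzero) difference `L - L♭`. -/
def IsAtomOf (S : Set (H →L[ℂ] H)) (A : H →L[ℂ] H) : Prop :=
  ∃ P ∈ S, latFlat S P ≠ P ∧ A = P - latFlat S P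

/-- The sum (supremum) of the atoms of `S`. -/
def atomSum (S : Set (H →L[ℂ] H)) : H →L[ℂ] H :=
  latSup {A | IsAtomOf S A}

/-- A spatial Morita context `(A, B, U, V)`. -/
def IsSpatialMoritaContext (A : Set (H →L[ℂ] H)) (B : Set (K →L[ℂ] K))
    (U : Set (H →L[ℂ] K)) (V : Set (K →L[ℂ] H)) : Prop :=
  IsLinSubspace U ∧ IsLinSubspace V ∧
    mulSet (mulSet B U) A ⊆ U ∧ mulSet (mulSet A V) B ⊆ V ∧
    A = wspan (mulSet V U) ∧ B = wspan (mulSet U V)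

/-- Spatial Morita equivalence. -/
def SpatiallyMoritaEquivalent (A : Set (H →L[ℂ] H)) (B : Set (K →L[ℂ] K)) : Prop :=
  ∃ (U : Set (H →L[ℂ] K)) (V : Set (K →L[ℂ] H)), IsSpatialMoritaContext A B U V

/-- A maximal abelian selfadjoint algebra: `D = D* = D′`. -/
def IsMasa (D : Set (H →L[ℂ] H)) : Prop :=
  (∀ a ∈ D, star a ∈ D) ∧ commutantS D = D

/-- A reflexive masa bimodule `W` (over the masas `D₂`, `D₁`) is synthetic iff `W_min = W`,
equivalently `W` is contained in every w*-closed `D₂,D₁`-bimodule whose reflexive hull is `W`. -/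
def IsSyntheticWrt (D₂ : Set (K →L[ℂ] K)) (D₁ : Set (H →L[ℂ] H))
    (W : Set (H →L[ℂ] K)) : Prop :=
  ∀ V : Set (H →L[ℂ] K), IsLinSubspace V → IsWStarClosed V →
    mulSet (mulSet D₂ V) D₁ ⊆ V → RefHull V = W → W ⊆ V

/-- The weak operator topology on `B(H,K)`. -/
def wot (H : Type u) (K : Type v) [NormedAddCommGroup H] [InnerProductSpace ℂ H]
    [NormedAddCommGroup K] [InnerProductSpace ℂ K] : TopologicalSpace (H →L[ℂ] K) :=
  ⨅ (x : H) (y : K), TopologicalSpace.induced (fun T => (inner ℂ y (T x) : ℂ)) inferInstance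

/-- A von Neumann algebra: a unital selfadjoint subalgebra of `B(H)`, closed in the
weak operator topology. -/
def IsVonNeumannAlgebra (A : Set (H →L[ℂ] H)) : Prop :=
  IsLinSubspace A ∧ (∀ a ∈ A, ∀ b ∈ A, a * b ∈ A) ∧ (∀ a ∈ A, star a ∈ A) ∧
    (1 : H →L[ℂ] H) ∈ A ∧ @IsClosed _ (wot H H) A

/-- The direct sum `X ⊕ Y` of two operators, acting on the Hilbert space direct sum. -/
def dsum (X : H →L[ℂ] H) (Y : K →L[ℂ] K) :
    WithLp 2 (H × K) →L[ℂ] WithLp 2 (H × K) :=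
  (((WithLp.prodContinuousLinearEquiv 2 ℂ H K).symm :
      (H × K) →L[ℂ] WithLp 2 (H × K)).comp (X.prodMap Y)).comp
    ((WithLp.prodContinuousLinearEquiv 2 ℂ H K) : WithLp 2 (H × K) →L[ℂ] (H × K))

end OperatorDefs
set_option linter.unusedSectionVars false
section Aux
variable {H : Type u} {K : Type v} {L : Type w}
variable [NormedAddCommGroup H] [InnerProductSpace ℂ H] [CompleteSpace H]
variable [NormedAddCommGroup K] [InnerProductSpace ℂ K] [CompleteSpace K]
variable [NormedAddCommGroup L] [InnerProductSpace ℂ L] [CompleteSpace L]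

theorem projOnto_apply_mem (S : Set K) (ξ : K) :
    projOntoClosure S ξ ∈ (Submodule.span ℂ S).topologicalClosure := by
  haveI := (Submodule.isClosed_topologicalClosure (Submodule.span ℂ S)).completeSpace_coe
  exact ((Submodule.orthogonalProjection (Submodule.span ℂ S).topologicalClosure ξ)).2

theorem projOnto_fix {S : Set K} {x : K}
    (hx : x ∈ (Submodule.span ℂ S).topologicalClosure) : projOntoClosure S x = x := by
  haveI := (Submodule.isClosed_topologicalClosure (Submodule.span ℂ S)).completeSpace_coe
  exact Submodule.starProjection_eq_self_iff.2 hx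

theorem projOnto_mem_of_fix {S : Set K} {x : K} (hx : projOntoClosure S x = x) :
    x ∈ (Submodule.span ℂ S).topologicalClosure := by
  rw [← hx]; exact projOnto_apply_mem S x

theorem projOnto_isProj (S : Set K) : IsProjOp (projOntoClosure S) := by
  constructor
  · ext ξ
    exact projOnto_fix (projOnto_apply_mem S ξ)
  · haveI := (Submodule.isClosed_topologicalClosure (Submodule.span ℂ S)).completeSpace_coe
    exact isSelfAdjoint_starProjection (Submodule.span ℂ S).topologicalClosure

theorem isProj_compl {P : K →L[ℂ] K} (hP : IsProjOp P) : IsProjOp (1 - P) := by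
  constructor
  · rw [sub_mul, one_mul, mul_sub, mul_one, hP.1]
    abel
  · rw [star_sub, star_one, hP.2]

theorem isProj_ext {P Q : K →L[ℂ] K} (hP : IsProjOp P) (hQ : IsProjOp Q)
    (h1 : ∀ ξ, Q (P ξ) = P ξ) (h2 : ∀ ξ, P (Q ξ) = Q ξ) : P = Q := by
  have e1 : Q * P = P := by ext ξ; exact h1 ξ
  have e2 : P * Q = Q := by ext ξ; exact h2 ξ
  have e3 := congrArg star e1
  rw [star_mul, hP.2, hQ.2] at e3
  rw [← e2, e3]

theorem sa_inner {P : K →L[ℂ] K} (hP : star P = P) (x y : K) :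
    (inner ℂ (P x) y : ℂ) = inner ℂ x (P y) := by
  conv_lhs => rw [← hP]
  rw [ContinuousLinearMap.star_eq_adjoint]
  exact ContinuousLinearMap.adjoint_inner_left P y x

theorem proj_eq_zero_of_inner {P : K →L[ℂ] K} (hP : IsProjOp P) {w : K}
    (hw : (inner ℂ (P w) w : ℂ) = 0) : P w = 0 := by
  have h2 : P (P w) = P w := congrFun (congrArg DFunLike.coe hP.1) w
  have : (inner ℂ (P w) (P w) : ℂ) = 0 := by
    rw [sa_inner hP.2, h2, ← inner_conj_symm, hw, map_zero]
  exact inner_self_eq_zero.1 this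

theorem mapsTo_spanCl {b : K →L[ℂ] L} {S : Set K} {N : Submodule ℂ L}
    (hN : IsClosed (N : Set L)) (h : ∀ x ∈ S, b x ∈ N) {x : K}
    (hx : x ∈ (Submodule.span ℂ S).topologicalClosure) : b x ∈ N := by
  have h1 : Submodule.span ℂ S ≤ N.comap (b.toLinearMap) := Submodule.span_le.2 h
  have h2 : IsClosed ((N.comap (b.toLinearMap) : Submodule ℂ K) : Set K) :=
    hN.preimage b.continuous
  exact Submodule.topologicalClosure_minimal _ h1 h2 hx

theorem spanCl_le {S : Set K} {N : Submodule ℂ K} (hN : IsClosed (N : Set K)) (h : S ⊆ N) :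
    ((Submodule.span ℂ S).topologicalClosure : Set K) ⊆ N :=
  Submodule.topologicalClosure_minimal _ (Submodule.span_le.2 h) hN

theorem invariance_eq {S : Set K} {b : K →L[ℂ] K}
    (h : ∀ x ∈ S, b x ∈ (Submodule.span ℂ S).topologicalClosure) :
    (1 - projOntoClosure S) * (b * projOntoClosure S) = 0 := by
  ext ξ
  have h1 : b (projOntoClosure S ξ) ∈ (Submodule.span ℂ S).topologicalClosure :=
    mapsTo_spanCl (Submodule.isClosed_topologicalClosure _) h (projOnto_apply_mem S ξ)
  simp only [ContinuousLinearMap.mul_apply, ContinuousLinearMap.sub_apply,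
    ContinuousLinearMap.one_apply, ContinuousLinearMap.zero_apply, projOnto_fix h1, sub_self]

theorem mem_mulSet {M : Set (K →L[ℂ] L)} {N : Set (H →L[ℂ] K)} {a : K →L[ℂ] L}
    {b : H →L[ℂ] K} (ha : a ∈ M) (hb : b ∈ N) : a.comp b ∈ mulSet M N :=
  ⟨a, ha, b, hb, rfl⟩

theorem subset_wspan (S : Set (H →L[ℂ] K)) : S ⊆ wspan S := by
  intro x hx
  unfold wspan
  exact @subset_closure (H →L[ℂ] K) (sigmaWeak H K)
    ((Submodule.span ℂ S : Submodule ℂ (H →L[ℂ] K)) : Set (H →L[ℂ] K))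
    x (Submodule.subset_span hx)

end Aux
section Aux2
set_option linter.unusedSectionVars false
variable {H : Type u} {K : Type v}
variable [NormedAddCommGroup H] [InnerProductSpace ℂ H] [CompleteSpace H]
variable [NormedAddCommGroup K] [InnerProductSpace ℂ K] [CompleteSpace K]

theorem wspan_apply {S : Set (H →L[ℂ] K)} {T : H →L[ℂ] K} (hT : T ∈ wspan S) (ξ : H) :
    T ξ ∈ (Submodule.span ℂ ((fun s : H →L[ℂ] K => s ξ) '' S)).topologicalClosure := by
  set M := (Submodule.span ℂ ((fun s : H →L[ℂ] K => s ξ) '' S)).topologicalClosure with hMdef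
  haveI : CompleteSpace M := (Submodule.isClosed_topologicalClosure _).completeSpace_coe
  have hCclosed : @IsClosed _ (sigmaWeak H K) {R : H →L[ℂ] K | R ξ ∈ M} := by
    have hset : {R : H →L[ℂ] K | R ξ ∈ M} =
        ⋂ (y : Mᗮ), {R : H →L[ℂ] K | (inner ℂ (y : K) (R ξ) : ℂ) = 0} := by
      ext R
      simp only [Set.mem_iInter, Set.mem_setOf_eq]
      constructor
      · intro h y
        exact (Submodule.mem_orthogonal' M (y : K)).1 y.2 (R ξ) h
      · intro h
        rw [← Submodule.orthogonal_orthogonal M]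
        exact (Submodule.mem_orthogonal Mᗮ (R ξ)).2 fun u hu => h ⟨u, hu⟩
    have hI : @IsClosed _ (sigmaWeak H K)
        (⋂ (y : Mᗮ), {R : H →L[ℂ] K | (inner ℂ (y : K) (R ξ) : ℂ) = 0}) := by
      refine @isClosed_iInter _ _ (sigmaWeak H K) _ fun y => ?_
      set xs : ℕ → H := fun m => if m = 0 then ξ else 0 with hxs
      set ys : ℕ → K := fun m => if m = 0 then (y : K) else 0 with hys
      have hxsum : Summable fun n => ‖xs n‖ ^ 2 := by
        apply summable_of_ne_finset_zero (s := {0})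
        intro b hb
        simp only [Finset.mem_singleton] at hb
        simp [hxs, hb]
      have hysum : Summable fun n => ‖ys n‖ ^ 2 := by
        apply summable_of_ne_finset_zero (s := {0})
        intro b hb
        simp only [Finset.mem_singleton] at hb
        simp [hys, hb]
      have hcont : @Continuous _ _ (sigmaWeak H K) _
          (fun R : H →L[ℂ] K => ∑' n, (inner ℂ (ys n) (R (xs n)) : ℂ)) := by
        rw [continuous_iff_le_induced]
        unfold sigmaWeak
        exact iInf_le_of_le xs (iInf_le_of_le ys (iInf_le_of_le hxsum (iInf_le _ hysum)))
      have hval : ∀ R : H →L[ℂ] K,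
          (∑' n, (inner ℂ (ys n) (R (xs n)) : ℂ)) = inner ℂ (y : K) (R ξ) := by
        intro R
        rw [tsum_eq_single 0 ?_]
        · simp [hxs, hys]
        · intro n hn
          simp [hxs, hys, hn]
      have hpre : {R : H →L[ℂ] K | (inner ℂ (y : K) (R ξ) : ℂ) = 0} =
          (fun R : H →L[ℂ] K => ∑' n, (inner ℂ (ys n) (R (xs n)) : ℂ)) ⁻¹' {0} := by
        ext R
        simp [hval R]
      exact hpre.symm ▸ (@IsClosed.preimage _ _ (sigmaWeak H K) _ _ hcont _ isClosed_singleton)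
    exact hset.symm ▸ hI
  have hspan : ((Submodule.span ℂ S : Submodule ℂ (H →L[ℂ] K)) : Set (H →L[ℂ] K)) ⊆
      {R : H →L[ℂ] K | R ξ ∈ M} := by
    intro R hR
    have h1 := Submodule.apply_mem_span_image_of_mem_span
      (f := (ContinuousLinearMap.apply ℂ K ξ).toLinearMap) hR
    exact Submodule.le_topologicalClosure _ h1
  unfold wspan at hT
  exact @closure_minimal _ (sigmaWeak H K) _ {R : H →L[ℂ] K | R ξ ∈ M} hspan hCclosed T hT
end Aux2
section Aux3
set_option linter.unusedSectionVars false
set_option maxHeartbeats 1000000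
variable {H : Type u} {K : Type v}
variable [NormedAddCommGroup H] [InnerProductSpace ℂ H] [CompleteSpace H]
variable [NormedAddCommGroup K] [InnerProductSpace ℂ K] [CompleteSpace K]

def appS (U : Set (H →L[ℂ] K)) (P : H →L[ℂ] H) : Set K :=
  {y : K | ∃ T ∈ U, ∃ ξ : H, T (P ξ) = y}

theorem opMap_eq (U : Set (H →L[ℂ] K)) (P : H →L[ℂ] H) :
    opMap U P = projOntoClosure (appS U P) := rfl

theorem appS_sub_cl {U : Set (H →L[ℂ] K)} {P : H →L[ℂ] H} :
    appS U P ⊆ ((Submodule.span ℂ (appS U P)).topologicalClosure : Set K) := fun _ hy =>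
  Submodule.le_topologicalClosure _ (Submodule.subset_span hy)

theorem opMap_isProj (U : Set (H →L[ℂ] K)) (P : H →L[ℂ] H) : IsProjOp (opMap U P) :=
  projOnto_isProj _

theorem opMap_apply_mem (U : Set (H →L[ℂ] K)) (P : H →L[ℂ] H) (ξ : K) :
    opMap U P ξ ∈ (Submodule.span ℂ (appS U P)).topologicalClosure :=
  projOnto_apply_mem _ ξ

theorem opMap_fix {U : Set (H →L[ℂ] K)} {P : H →L[ℂ] H} {x : K}
    (hx : x ∈ (Submodule.span ℂ (appS U P)).topologicalClosure) : opMap U P x = x :=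
  projOnto_fix hx

theorem opMap_mem_of_fix {U : Set (H →L[ℂ] K)} {P : H →L[ℂ] H} {x : K}
    (hx : opMap U P x = x) : x ∈ (Submodule.span ℂ (appS U P)).topologicalClosure :=
  projOnto_mem_of_fix hx

theorem opMap_sub_orthogonal (U : Set (H →L[ℂ] K)) (P : H →L[ℂ] H) (x : K) :
    ∀ u ∈ (Submodule.span ℂ (appS U P)).topologicalClosure,
      (inner ℂ (x - opMap U P x) u : ℂ) = 0 := by
  haveI := (Submodule.isClosed_topologicalClosure
    (Submodule.span ℂ (appS U P))).completeSpace_coe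
  intro u hu
  exact (Submodule.mem_orthogonal' _ _).1
    (Submodule.sub_starProjection_mem_orthogonal (K := (Submodule.span ℂ (appS U P)).topologicalClosure) x) u hu

theorem lat_fix {Bs : Set (K →L[ℂ] K)} {L : K →L[ℂ] K} (hL : L ∈ LatSet Bs)
    {b : K →L[ℂ] K} (hb : b ∈ Bs) (ξ : K) : L (b (L ξ)) = b (L ξ) := by
  have h := congrFun (congrArg DFunLike.coe (hL.2 b hb)) ξ
  simp only [ContinuousLinearMap.mul_apply, ContinuousLinearMap.sub_apply,
    ContinuousLinearMap.one_apply, ContinuousLinearMap.zero_apply, sub_eq_zero] at h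
  exact h.symm

theorem opMap_mem_LatSet {Bs : Set (K →L[ℂ] K)} {U : Set (H →L[ℂ] K)}
    (hBU : ∀ b ∈ Bs, ∀ T ∈ U, b.comp T ∈ U) (P : H →L[ℂ] H) : opMap U P ∈ LatSet Bs := by
  refine ⟨opMap_isProj _ _, fun b hb => ?_⟩
  apply invariance_eq
  rintro x ⟨T, hT, ξ, rfl⟩
  exact Submodule.le_topologicalClosure _
    (Submodule.subset_span ⟨b.comp T, hBU b hb T hT, ξ, rfl⟩)

theorem opMap_mono {U : Set (H →L[ℂ] K)} {P Q : H →L[ℂ] H} (hP : IsProjOp P)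
    (hQ : IsProjOp Q) (h : projLE P Q) : projLE (opMap U P) (opMap U Q) := by
  have h2 := congrArg star h
  rw [star_mul, hP.2, hQ.2] at h2
  have hQP : ∀ ξ, Q (P ξ) = P ξ := fun ξ => congrFun (congrArg DFunLike.coe h2) ξ
  have hsub : appS U P ⊆ ((Submodule.span ℂ (appS U Q)).topologicalClosure : Set K) := by
    rintro x ⟨T, hT, ξ, rfl⟩
    rw [← hQP ξ]
    exact appS_sub_cl ⟨T, hT, P ξ, rfl⟩
  have h3 : (Submodule.span ℂ (appS U P)).topologicalClosure ≤
      (Submodule.span ℂ (appS U Q)).topologicalClosure :=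
    Submodule.topologicalClosure_minimal _ (Submodule.span_le.2 hsub)
      (Submodule.isClosed_topologicalClosure _)
  have e : opMap U Q * opMap U P = opMap U P := by
    ext ξ
    exact opMap_fix (h3 (opMap_apply_mem U P ξ))
  have e2 := congrArg star e
  rw [star_mul, (opMap_isProj U P).2, (opMap_isProj U Q).2] at e2
  exact e2

theorem phi_psi_id {Bs : Set (K →L[ℂ] K)} {U : Set (H →L[ℂ] K)} {V : Set (K →L[ℂ] H)}
    (hB1 : (1 : K →L[ℂ] K) ∈ Bs) (hBspan : Bs = wspan (mulSet U V))
    {L : K →L[ℂ] K} (hL : L ∈ LatSet Bs) : opMap U (opMap V L) = L := by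
  have hUVB : ∀ T ∈ U, ∀ S ∈ V, T.comp S ∈ Bs := fun T hT S hS =>
    hBspan ▸ subset_wspan _ (mem_mulSet hT hS)
  have hNc : IsClosed ((LinearMap.ker ((1 - L : K →L[ℂ] K) : K →ₗ[ℂ] K) : Submodule ℂ K) : Set K) :=
    ContinuousLinearMap.isClosed_ker _
  have hmemN : ∀ x : K, x ∈ LinearMap.ker ((1 - L : K →L[ℂ] K) : K →ₗ[ℂ] K) ↔ L x = x := by
    intro x
    rw [LinearMap.mem_ker, ContinuousLinearMap.coe_coe, ContinuousLinearMap.sub_apply, ContinuousLinearMap.one_apply,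
      sub_eq_zero, eq_comm]
  have hgen : ∀ x ∈ appS U (opMap V L), x ∈ LinearMap.ker ((1 - L : K →L[ℂ] K) : K →ₗ[ℂ] K) := by
    rintro x ⟨T, hT, ξ, rfl⟩
    refine mapsTo_spanCl hNc ?_ (opMap_apply_mem V L ξ)
    rintro y ⟨S, hS, η, rfl⟩
    rw [hmemN]
    exact lat_fix hL (hUVB T hT S hS) η
  refine isProj_ext (opMap_isProj U _) hL.1 ?_ ?_
  · intro ξ
    exact (hmemN _).1 (spanCl_le hNc hgen (opMap_apply_mem U _ ξ))
  · intro ξ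
    apply opMap_fix
    have h2 := wspan_apply (hBspan ▸ hB1) (L ξ)
    rw [ContinuousLinearMap.one_apply] at h2
    refine Submodule.topologicalClosure_minimal _ (Submodule.span_le.2 ?_)
      (Submodule.isClosed_topologicalClosure _) h2
    rintro y ⟨R, hR, rfl⟩
    obtain ⟨T, hT, S, hS, rfl⟩ := hR
    have h3 : opMap V L (S (L ξ)) = S (L ξ) := opMap_fix (appS_sub_cl ⟨S, hS, ξ, rfl⟩)
    have h4 : T (opMap V L (S (L ξ))) ∈ appS U (opMap V L) := ⟨T, hT, S (L ξ), rfl⟩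
    rw [h3] at h4
    exact appS_sub_cl h4

theorem compl_opMap_mem_Lat {As : Set (H →L[ℂ] H)} {U : Set (H →L[ℂ] K)}
    (hUA : ∀ T ∈ U, ∀ a ∈ As, T.comp a ∈ U) (P : K →L[ℂ] K) :
    1 - opMap (adjSet U) P ∈ LatSet As := by
  refine ⟨isProj_compl (opMap_isProj _ _), fun a ha => ?_⟩
  have h0 : (1 - opMap (adjSet U) P) * (star a * opMap (adjSet U) P) = 0 := by
    apply invariance_eq
    rintro x ⟨T', ⟨T, hT, rfl⟩, ξ, rfl⟩
    have h1 : ContinuousLinearMap.adjoint (T.comp a) (P ξ) =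
        star a (ContinuousLinearMap.adjoint T (P ξ)) := by
      rw [ContinuousLinearMap.adjoint_comp, ContinuousLinearMap.star_eq_adjoint]
      rfl
    rw [← h1]
    exact appS_sub_cl ⟨ContinuousLinearMap.adjoint (T.comp a),
      ⟨T.comp a, hUA T hT a ha, rfl⟩, ξ, rfl⟩
  have h1 := congrArg star h0
  rw [star_zero, star_mul, star_mul, star_sub, star_one, star_star,
    (opMap_isProj (adjSet U) P).2] at h1
  rw [sub_sub_cancel, ← mul_assoc]
  exact h1

theorem opMap_adj_compl {As : Set (H →L[ℂ] H)} {U : Set (H →L[ℂ] K)} {V : Set (K →L[ℂ] H)}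
    (hA1 : (1 : H →L[ℂ] H) ∈ As) (hAspan : As = wspan (mulSet V U))
    {L : H →L[ℂ] H} (hL : L ∈ LatSet As) :
    opMap (adjSet U) (1 - opMap U L) = 1 - L := by
  set P : K →L[ℂ] K := 1 - opMap U L with hPdef
  have hVUA : ∀ S ∈ V, ∀ T ∈ U, S.comp T ∈ As := fun S hS T hT =>
    hAspan ▸ subset_wspan _ (mem_mulSet hS hT)
  have hLproj := hL.1
  have hkerc : IsClosed ((LinearMap.ker (L : H →ₗ[ℂ] H) : Submodule ℂ H) : Set H) :=
    ContinuousLinearMap.isClosed_ker _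
  have hgen : ∀ x ∈ appS (adjSet U) P, x ∈ LinearMap.ker (L : H →ₗ[ℂ] H) := by
    rintro x ⟨T', ⟨T, hT, rfl⟩, η, rfl⟩
    rw [LinearMap.mem_ker]
    set w : H := ContinuousLinearMap.adjoint T (P η) with hw
    apply proj_eq_zero_of_inner hLproj
    -- ⟪L w, w⟫ = 0
    have hz : T (L w) ∈ appS U L := ⟨T, hT, w, rfl⟩
    have hfix : opMap U L (T (L w)) = T (L w) := opMap_fix (appS_sub_cl hz)
    have hP0 : opMap U L (P η) = 0 := by
      rw [hPdef]
      rw [ContinuousLinearMap.sub_apply, ContinuousLinearMap.one_apply, map_sub]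
      have := congrFun (congrArg DFunLike.coe (opMap_isProj U L).1) η
      rw [ContinuousLinearMap.mul_apply] at this
      rw [this, sub_self]
    have : (inner ℂ w (L w) : ℂ) = 0 := by
      rw [hw, ContinuousLinearMap.adjoint_inner_left T (L w) (P η)]
      rw [← hfix, ← sa_inner (opMap_isProj U L).2 (P η) (T (L w)), hP0, inner_zero_left]
    rw [← inner_conj_symm, this, map_zero]
  refine isProj_ext (opMap_isProj _ _) (isProj_compl hLproj) ?_ ?_
  · intro ξ
    have h5 : L (opMap (adjSet U) P ξ) = 0 :=
      LinearMap.mem_ker.1 (spanCl_le hkerc hgen (opMap_apply_mem _ _ ξ))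
    rw [ContinuousLinearMap.sub_apply, ContinuousLinearMap.one_apply, h5, sub_zero]
  · intro ξ
    apply opMap_fix
    set x : H := (1 - L) ξ with hxdef
    have hx : L x = 0 := by
      rw [hxdef, ContinuousLinearMap.sub_apply, ContinuousLinearMap.one_apply, map_sub]
      have := congrFun (congrArg DFunLike.coe hLproj.1) ξ
      rw [ContinuousLinearMap.mul_apply] at this
      rw [this, sub_self]
    set m : H := x - opMap (adjSet U) P x with hmdef
    have hm_orth := opMap_sub_orthogonal (adjSet U) P x
    have hPT : ∀ T ∈ U, opMap U L (T m) = T m := by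
      intro T hT
      have h7 : ∀ η, (inner ℂ (P η) (T m) : ℂ) = 0 := by
        intro η
        rw [← ContinuousLinearMap.adjoint_inner_left T m (P η), ← inner_conj_symm,
          hm_orth _ (appS_sub_cl ⟨ContinuousLinearMap.adjoint T, ⟨T, hT, rfl⟩, η, rfl⟩),
          map_zero]
      have h6 : P (T m) = 0 :=
        proj_eq_zero_of_inner (isProj_compl (opMap_isProj U L)) (h7 (T m))
      rw [hPdef, ContinuousLinearMap.sub_apply, ContinuousLinearMap.one_apply,
        sub_eq_zero] at h6
      exact h6.symm
    have hSTm : ∀ R ∈ mulSet V U, (1 - L) (R m) = 0 := by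
      rintro R ⟨S, hS, T, hT, rfl⟩
      have h8 : T m ∈ (Submodule.span ℂ (appS U L)).topologicalClosure :=
        opMap_mem_of_fix (hPT T hT)
      have h9 : S (T m) ∈ LinearMap.ker ((1 - L : H →L[ℂ] H) : H →ₗ[ℂ] H) := by
        refine mapsTo_spanCl (ContinuousLinearMap.isClosed_ker _) ?_ h8
        rintro y ⟨T', hT', η, rfl⟩
        rw [LinearMap.mem_ker, ContinuousLinearMap.coe_coe, ContinuousLinearMap.sub_apply, ContinuousLinearMap.one_apply,
          sub_eq_zero]
        exact (lat_fix hL (hVUA S hS T' hT') η).symm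
      exact LinearMap.mem_ker.1 h9
    have h10 := wspan_apply (hAspan ▸ hA1) m
    rw [ContinuousLinearMap.one_apply] at h10
    have h11 : m ∈ LinearMap.ker ((1 - L : H →L[ℂ] H) : H →ₗ[ℂ] H) := by
      refine Submodule.topologicalClosure_minimal _ (Submodule.span_le.2 ?_)
        (ContinuousLinearMap.isClosed_ker _) h10
      rintro y ⟨R, hR, rfl⟩
      rw [SetLike.mem_coe, LinearMap.mem_ker]
      exact hSTm R hR
    have hLm : L m = m := by
      have := LinearMap.mem_ker.1 h11
      rw [ContinuousLinearMap.coe_coe, ContinuousLinearMap.sub_apply, ContinuousLinearMap.one_apply, sub_eq_zero] at this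
      exact this.symm
    have hLm0 : L m = 0 := by
      rw [hmdef, map_sub, hx]
      have : L (opMap (adjSet U) P x) = 0 :=
        LinearMap.mem_ker.1 (spanCl_le hkerc hgen (opMap_apply_mem _ _ x))
      rw [this, sub_self]
    have hm0 : m = 0 := by rw [← hLm, hLm0]
    have hxQ : x = opMap (adjSet U) P x := by
      have := hm0
      rw [hmdef, sub_eq_zero] at this
      exact this
    rw [hxQ]
    exact opMap_apply_mem _ _ x
end Aux3
/-- **Theorem 4.1.** For a spatial Morita context `(A, B, U, V)` with `A`, `B` unital, and
`φ = Map(U)`, `ψ = Map(V)`: (i) the semilattices of `U` are `S₁,φ = Lat(A)`, `S₂,φ = Lat(B)`,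
and `φ` restricts to a lattice isomorphism of `Lat(A)` onto `Lat(B)`;
(ii) `ψ|_{Lat(B)} = (φ|_{Lat(A)})⁻¹`. -/
theorem stmt11 {H₁ : Type*} {H₂ : Type*}
    [NormedAddCommGroup H₁] [InnerProductSpace ℂ H₁] [CompleteSpace H₁]
    [NormedAddCommGroup H₂] [InnerProductSpace ℂ H₂] [CompleteSpace H₂]
    (A : Set (H₁ →L[ℂ] H₁)) (B : Set (H₂ →L[ℂ] H₂))
    (hA : IsWStarClosedAlgebra A) (hB : IsWStarClosedAlgebra B)
    (hA1 : (1 : H₁ →L[ℂ] H₁) ∈ A) (hB1 : (1 : H₂ →L[ℂ] H₂) ∈ B)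
    (U : Set (H₁ →L[ℂ] H₂)) (V : Set (H₂ →L[ℂ] H₁))
    (hctx : IsSpatialMoritaContext A B U V) :
    ({X : H₁ →L[ℂ] H₁ | ∃ P : H₂ →L[ℂ] H₂, IsProjOp P ∧ X = 1 - opMap (adjSet U) P}
        = LatSet A ∧
     {Y : H₂ →L[ℂ] H₂ | ∃ P : H₁ →L[ℂ] H₁, IsProjOp P ∧ Y = opMap U P} = LatSet B ∧
     IsLatticeIsomOn (opMap U) (LatSet A) (LatSet B)) ∧
    ((∀ L ∈ LatSet A, opMap V (opMap U L) = L) ∧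
     (∀ L ∈ LatSet B, opMap U (opMap V L) = L)) := by
  obtain ⟨hUlin, hVlin, hBUA, hAVB, hAspan, hBspan⟩ := hctx
  have hBU : ∀ b ∈ B, ∀ T ∈ U, b.comp T ∈ U := by
    intro b hb T hT
    have h := hBUA (mem_mulSet (mem_mulSet hb hT) hA1)
    simpa [ContinuousLinearMap.one_def, ContinuousLinearMap.comp_id] using h
  have hUA : ∀ T ∈ U, ∀ a ∈ A, T.comp a ∈ U := by
    intro T hT a ha
    have h := hBUA (mem_mulSet (mem_mulSet hB1 hT) ha)
    simpa [ContinuousLinearMap.one_def, ContinuousLinearMap.id_comp] using h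
  have hAV : ∀ a ∈ A, ∀ S ∈ V, a.comp S ∈ V := by
    intro a ha S hS
    have h := hAVB (mem_mulSet (mem_mulSet ha hS) hB1)
    simpa [ContinuousLinearMap.one_def, ContinuousLinearMap.comp_id] using h
  have hpsiphi : ∀ L ∈ LatSet A, opMap V (opMap U L) = L := fun L hL =>
    phi_psi_id hA1 hAspan hL
  have hphipsi : ∀ L ∈ LatSet B, opMap U (opMap V L) = L := fun L hL =>
    phi_psi_id hB1 hBspan hL
  refine ⟨⟨?_, ?_, ?_⟩, hpsiphi, hphipsi⟩
  · ext X
    simp only [Set.mem_setOf_eq]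
    constructor
    · rintro ⟨P, hP, rfl⟩
      exact compl_opMap_mem_Lat hUA P
    · intro hX
      refine ⟨1 - opMap U X, isProj_compl (opMap_isProj U X), ?_⟩
      rw [opMap_adj_compl hA1 hAspan hX, sub_sub_cancel]
  · ext Y
    simp only [Set.mem_setOf_eq]
    constructor
    · rintro ⟨P, hP, rfl⟩
      exact opMap_mem_LatSet hBU P
    · intro hY
      exact ⟨opMap V Y, opMap_isProj V Y, (hphipsi Y hY).symm⟩
  · refine ⟨⟨fun P hP => opMap_mem_LatSet hBU P, ?_, ?_⟩, ?_⟩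
    · intro P hP Q hQ hPQ
      rw [← hpsiphi P hP, ← hpsiphi Q hQ, hPQ]
    · intro Y hY
      exact ⟨opMap V Y, opMap_mem_LatSet hAV Y, hphipsi Y hY⟩
    · intro P hP Q hQ
      constructor
      · exact opMap_mono hP.1 hQ.1
      · intro h
        have h2 := opMap_mono (U := V) (opMap_isProj U P) (opMap_isProj U Q) h
        rwa [hpsiphi P hP, hpsiphi Q hQ] at h2
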